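/- arXiv:1603.07301 — 3 statements merged into one kernel-verified Lean document; each statement's English description precedes it below -/
import Mathlib

section
/- Let H, A ∈ ℝ^{N×N} be symmetric positive definite matrices with H ⪯ A, let D ∈ ℝ^{N×M}, and let g ∈ ℝ^N be a nonzero vector belonging to the range of D. Set C = D (Dᵀ A D)† Dᵀ and let κ̲ be the smallest eigenvalue of A^{1/2} H⁻¹ A^{1/2}. Then κ̲ ≥ 1 and (gᵀ C g)/(gᵀ H⁻¹ g) ≤ 1/κ̲; in particular (gᵀ C g)/(gᵀ H⁻¹ g) ≤ 1. -/
open Matrix Filter Topology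

noncomputable section

/-- Identification of `EuclideanSpace ℝ (Fin N)` with plain tuples `Fin N → ℝ`. -/
def toEuc {N : ℕ} (v : Fin N → ℝ) : EuclideanSpace ℝ (Fin N) :=
  (WithLp.equiv 2 (Fin N → ℝ)).symm v

def ofEuc {N : ℕ} (v : EuclideanSpace ℝ (Fin N)) : Fin N → ℝ :=
  WithLp.equiv 2 (Fin N → ℝ) v

/-- The quadratic form `vᵀ M v`. -/
def qf {N : ℕ} (M : Matrix (Fin N) (Fin N) ℝ)
    (v : EuclideanSpace ℝ (Fin N)) : ℝ :=
  ofEuc v ⬝ᵥ M.mulVec (ofEuc v)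

/-- Matrix-vector product `M v`, viewed in `EuclideanSpace`. -/
def mulE {N : ℕ} (M : Matrix (Fin N) (Fin N) ℝ)
    (v : EuclideanSpace ℝ (Fin N)) : EuclideanSpace ℝ (Fin N) :=
  toEuc (M.mulVec (ofEuc v))

/-- The range of the matrix `D`, i.e. `{D u : u ∈ ℝ^M}`, as a subset of `EuclideanSpace`. -/
def rangeD {N M : ℕ} (D : Matrix (Fin N) (Fin M) ℝ) : Set (EuclideanSpace ℝ (Fin N)) :=
  {x | ∃ u : Fin M → ℝ, x = toEuc (D.mulVec u)}

open scoped Classical in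
/-- The Moore–Penrose pseudo-inverse of a real matrix, defined via its characterizing
(Penrose) equations; it exists and is unique for every real matrix. -/
def pinv {m n : ℕ} (A : Matrix (Fin m) (Fin n) ℝ) : Matrix (Fin n) (Fin m) ℝ :=
  if h : ∃ B : Matrix (Fin n) (Fin m) ℝ,
      A * B * A = A ∧ B * A * B = B ∧ (A * B)ᵀ = A * B ∧ (B * A)ᵀ = B * A
  then h.choose else 0

/-- The square root of a positive semidefinite matrix, as `Matrix.PosSemidef.sqrt` was
defined in the older Mathlib (removed since). -/
def psdSqrt {N : ℕ} {A : Matrix (Fin N) (Fin N) ℝ} (hA : A.PosSemidef) :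
    Matrix (Fin N) (Fin N) ℝ :=
  (hA.1.eigenvectorUnitary : Matrix (Fin N) (Fin N) ℝ) *
    diagonal (fun i => Real.sqrt (hA.1.eigenvalues i)) *
    (star hA.1.eigenvectorUnitary : Matrix (Fin N) (Fin N) ℝ)

end

section auxiliary
variable {m n : ℕ}

lemma aux_sandwich_mul {U : Matrix (Fin n) (Fin n) ℝ} (hU2 : Uᵀ * U = 1) (a b : Fin n → ℝ) :
    (U * diagonal a * Uᵀ) * (U * diagonal b * Uᵀ) = U * diagonal (fun i => a i * b i) * Uᵀ := by
  have : (U * diagonal a * Uᵀ) * (U * diagonal b * Uᵀ)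
      = U * (diagonal a * ((Uᵀ * U) * diagonal b)) * Uᵀ := by
    simp only [Matrix.mul_assoc]
  rw [this, hU2, Matrix.one_mul, diagonal_mul_diagonal]

lemma aux_sandwich_transpose {U : Matrix (Fin n) (Fin n) ℝ} (a : Fin n → ℝ) :
    (U * diagonal a * Uᵀ)ᵀ = U * diagonal a * Uᵀ := by
  simp [Matrix.transpose_mul, Matrix.mul_assoc]

lemma aux_penrose_of_decomp {U : Matrix (Fin n) (Fin n) ℝ} (hU2 : Uᵀ * U = 1)
    (lam : Fin n → ℝ) {S : Matrix (Fin n) (Fin n) ℝ} (hS : S = U * diagonal lam * Uᵀ) :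
    ∃ B : Matrix (Fin n) (Fin n) ℝ,
      S * B * S = S ∧ B * S * B = B ∧ (S * B)ᵀ = S * B ∧ (B * S)ᵀ = B * S := by
  have h3 : (fun i => lam i * (lam i)⁻¹ * lam i) = lam := by
    funext i; rcases eq_or_ne (lam i) 0 with h | h <;> field_simp
  have h4 : (fun i => (lam i)⁻¹ * lam i * (lam i)⁻¹) = fun i => (lam i)⁻¹ := by
    funext i; rcases eq_or_ne (lam i) 0 with h | h <;> field_simp
  refine ⟨U * diagonal (fun i => (lam i)⁻¹) * Uᵀ, ?_, ?_, ?_, ?_⟩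
  · rw [hS, aux_sandwich_mul hU2, aux_sandwich_mul hU2]
    congr 2
    exact diagonal_eq_diagonal_iff.mpr fun i => congrFun h3 i
  · rw [hS, aux_sandwich_mul hU2, aux_sandwich_mul hU2]
    congr 2
    exact diagonal_eq_diagonal_iff.mpr fun i => congrFun h4 i
  · rw [hS, aux_sandwich_mul hU2, aux_sandwich_transpose]
  · rw [hS, aux_sandwich_mul hU2, aux_sandwich_transpose]

lemma aux_penrose_exists {S : Matrix (Fin n) (Fin n) ℝ} (hS : S.IsHermitian) :
    ∃ B : Matrix (Fin n) (Fin n) ℝ,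
      S * B * S = S ∧ B * S * B = B ∧ (S * B)ᵀ = S * B ∧ (B * S)ᵀ = B * S := by
  have hU2 : ((hS.eigenvectorUnitary : Matrix (Fin n) (Fin n) ℝ))ᵀ
      * (hS.eigenvectorUnitary : Matrix (Fin n) (Fin n) ℝ) = 1 := by
    have := (Matrix.mem_unitaryGroup_iff').mp hS.eigenvectorUnitary.2
    simpa [Matrix.star_eq_conjTranspose, Matrix.conjTranspose_eq_transpose_of_trivial] using this
  refine aux_penrose_of_decomp hU2 hS.eigenvalues ?_
  have := hS.spectral_theorem
  simpa [Matrix.star_eq_conjTranspose, Matrix.conjTranspose_eq_transpose_of_trivial,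
    Function.comp] using this

lemma aux_penrose_unique {A : Matrix (Fin m) (Fin n) ℝ} {B₁ B₂ : Matrix (Fin n) (Fin m) ℝ}
    (h1 : A * B₁ * A = A ∧ B₁ * A * B₁ = B₁ ∧ (A * B₁)ᵀ = A * B₁ ∧ (B₁ * A)ᵀ = B₁ * A)
    (h2 : A * B₂ * A = A ∧ B₂ * A * B₂ = B₂ ∧ (A * B₂)ᵀ = A * B₂ ∧ (B₂ * A)ᵀ = B₂ * A) :
    B₁ = B₂ := by
  obtain ⟨e1, e2, e3, e4⟩ := h1
  obtain ⟨f1, f2, f3, f4⟩ := h2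
  have hAB : A * B₁ = A * B₂ := by
    calc A * B₁ = (A * B₁)ᵀ := e3.symm
    _ = ((A * B₂ * A) * B₁)ᵀ := by rw [f1]
    _ = ((A * B₂) * (A * B₁))ᵀ := by rw [Matrix.mul_assoc]
    _ = (A * B₁)ᵀ * (A * B₂)ᵀ := by rw [Matrix.transpose_mul]
    _ = (A * B₁) * (A * B₂) := by rw [e3, f3]
    _ = (A * B₁ * A) * B₂ := by simp only [Matrix.mul_assoc]
    _ = A * B₂ := by rw [e1]
  have hBA : B₁ * A = B₂ * A := by
    calc B₁ * A = (B₁ * A)ᵀ := e4.symm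
    _ = (B₁ * (A * B₂ * A))ᵀ := by rw [f1]
    _ = ((B₁ * A) * (B₂ * A))ᵀ := by simp only [Matrix.mul_assoc]
    _ = (B₂ * A)ᵀ * (B₁ * A)ᵀ := by rw [Matrix.transpose_mul]
    _ = (B₂ * A) * (B₁ * A) := by rw [e4, f4]
    _ = B₂ * (A * B₁ * A) := by simp only [Matrix.mul_assoc]
    _ = B₂ * A := by rw [e1]
  calc B₁ = B₁ * A * B₁ := e2.symm
  _ = B₁ * A * B₂ := by rw [Matrix.mul_assoc, hAB, ← Matrix.mul_assoc]
  _ = B₂ * A * B₂ := by rw [hBA]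
  _ = B₂ := f2

lemma aux_pinv_spec {A : Matrix (Fin m) (Fin n) ℝ}
    (hex : ∃ B : Matrix (Fin n) (Fin m) ℝ,
      A * B * A = A ∧ B * A * B = B ∧ (A * B)ᵀ = A * B ∧ (B * A)ᵀ = B * A) :
    A * pinv A * A = A ∧ pinv A * A * pinv A = pinv A ∧
      (A * pinv A)ᵀ = A * pinv A ∧ (pinv A * A)ᵀ = pinv A * A := by
  rw [pinv, dif_pos hex]
  exact hex.choose_spec

lemma aux_pinv_symm {S : Matrix (Fin n) (Fin n) ℝ} (hSt : Sᵀ = S)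
    (hex : ∃ B : Matrix (Fin n) (Fin n) ℝ,
      S * B * S = S ∧ B * S * B = B ∧ (S * B)ᵀ = S * B ∧ (B * S)ᵀ = B * S) :
    (pinv S)ᵀ = pinv S := by
  obtain ⟨e1, e2, e3, e4⟩ := aux_pinv_spec hex
  set B := pinv S
  refine aux_penrose_unique (A := S) ?_ ⟨e1, e2, e3, e4⟩
  refine ⟨?_, ?_, ?_, ?_⟩
  · calc S * Bᵀ * S = (Sᵀ * B * Sᵀ)ᵀ := by simp [Matrix.transpose_mul, Matrix.mul_assoc]
    _ = S := by rw [hSt, e1, hSt]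
  · calc Bᵀ * S * Bᵀ = (B * Sᵀ * B)ᵀ := by simp [Matrix.transpose_mul, Matrix.mul_assoc]
    _ = Bᵀ := by rw [hSt, e2]
  · calc (S * Bᵀ)ᵀ = B * Sᵀ := by simp [Matrix.transpose_mul, e4]
    _ = (B * S)ᵀᵀ := by rw [hSt, Matrix.transpose_transpose]
    _ = (B * S)ᵀ := congrArg Matrix.transpose e4
    _ = Sᵀ * Bᵀ := by rw [Matrix.transpose_mul]
    _ = S * Bᵀ := by rw [hSt]
  · calc (Bᵀ * S)ᵀ = Sᵀ * B := by simp [Matrix.transpose_mul, e3]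
    _ = (S * B)ᵀᵀ := by rw [hSt, Matrix.transpose_transpose]
    _ = (S * B)ᵀ := congrArg Matrix.transpose e3
    _ = Bᵀ * Sᵀ := by rw [Matrix.transpose_mul]
    _ = Bᵀ * S := by rw [hSt]

lemma aux_psd_of_eig_ge {X : Matrix (Fin n) (Fin n) ℝ} (hX : X.IsHermitian) (c : ℝ)
    (h : ∀ i, c ≤ hX.eigenvalues i) : (X - c • 1).PosSemidef := by
  set U : Matrix (Fin n) (Fin n) ℝ := (hX.eigenvectorUnitary : Matrix (Fin n) (Fin n) ℝ) with hU
  have hU1 : U * Uᵀ = 1 := by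
    have := (Matrix.mem_unitaryGroup_iff).mp hX.eigenvectorUnitary.2
    simpa [hU, Matrix.star_eq_conjTranspose, Matrix.conjTranspose_eq_transpose_of_trivial]
      using this
  have hspec : X = U * diagonal hX.eigenvalues * Uᵀ := by
    have := hX.spectral_theorem
    simpa [hU, Matrix.star_eq_conjTranspose, Matrix.conjTranspose_eq_transpose_of_trivial,
      Function.comp] using this
  have h1 : (c : ℝ) • (1 : Matrix (Fin n) (Fin n) ℝ) = U * diagonal (fun _ => c) * Uᵀ := by
    have : diagonal (fun _ : Fin n => c) = c • (1 : Matrix (Fin n) (Fin n) ℝ) := by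
      simp [Matrix.smul_one_eq_diagonal]
    rw [this]
    rw [show U * (c • (1:Matrix (Fin n) (Fin n) ℝ)) * Uᵀ = c • (U * Uᵀ) by
      simp [Matrix.mul_smul, Matrix.smul_mul], hU1]
  have key : X - c • 1 = U * diagonal (fun i => hX.eigenvalues i - c) * Uᵀ := by
    conv_lhs => rw [hspec, h1]
    rw [← Matrix.sub_mul, ← Matrix.mul_sub, diagonal_sub]
  rw [key]
  have hd : Matrix.PosSemidef (diagonal (fun i => hX.eigenvalues i - c)) :=
    Matrix.PosSemidef.diagonal (fun i => sub_nonneg.mpr (h i))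
  have := hd.mul_mul_conjTranspose_same U
  simpa [Matrix.conjTranspose_eq_transpose_of_trivial] using this

lemma aux_eig_ge_of_psd {X : Matrix (Fin n) (Fin n) ℝ} (hX : X.IsHermitian) (c : ℝ)
    (h : (X - c • 1).PosSemidef) : ∀ i, c ≤ hX.eigenvalues i := by
  intro i
  set v : Fin n → ℝ := ⇑(hX.eigenvectorBasis i) with hv
  have hnorm : v ⬝ᵥ v = 1 := by
    have h1 : ‖hX.eigenvectorBasis i‖ = 1 := hX.eigenvectorBasis.orthonormal.1 i
    have h2 : (inner ℝ (hX.eigenvectorBasis i) (hX.eigenvectorBasis i) : ℝ) = 1 := by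
      rw [real_inner_self_eq_norm_sq, h1]; norm_num
    rw [← h2]
    simp [hv, EuclideanSpace.inner_eq_star_dotProduct, dotProduct]
    rw [EuclideanSpace.inner_eq_star_dotProduct] at h2
    simpa [dotProduct] using h2
  have heig : hX.eigenvalues i = v ⬝ᵥ X *ᵥ v := by
    have := hX.eigenvalues_eq i
    simpa [hv] using this
  have := h.dotProduct_mulVec_nonneg v
  have hexp : v ⬝ᵥ (X - c • 1) *ᵥ v = v ⬝ᵥ X *ᵥ v - c * (v ⬝ᵥ v) := by
    simp [Matrix.sub_mulVec, dotProduct_sub, Matrix.smul_mulVec, dotProduct_smul]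
  simp only [star_trivial] at this
  rw [hexp, hnorm] at this
  linarith [heig ▸ this]

lemma aux_psd_conj {X : Matrix (Fin n) (Fin n) ℝ} (hX : X.PosSemidef)
    (B : Matrix (Fin m) (Fin n) ℝ) : (B * X * Bᵀ).PosSemidef := by
  have := hX.mul_mul_conjTranspose_same B
  simpa [Matrix.conjTranspose_eq_transpose_of_trivial] using this

lemma aux_dot_le_of_psd_sub {X Y : Matrix (Fin n) (Fin n) ℝ} (h : (X - Y).PosSemidef)
    (x : Fin n → ℝ) : x ⬝ᵥ Y *ᵥ x ≤ x ⬝ᵥ X *ᵥ x := by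
  have := h.dotProduct_mulVec_nonneg x
  simp only [star_trivial, Matrix.sub_mulVec, dotProduct_sub] at this
  linarith

lemma aux_psdSqrt {A : Matrix (Fin n) (Fin n) ℝ} (hA : A.PosSemidef) :
    psdSqrt hA * psdSqrt hA = A ∧ (psdSqrt hA)ᵀ = psdSqrt hA := by
  have hU2 : ((hA.1.eigenvectorUnitary : Matrix (Fin n) (Fin n) ℝ))ᵀ
      * (hA.1.eigenvectorUnitary : Matrix (Fin n) (Fin n) ℝ) = 1 := by
    have := (Matrix.mem_unitaryGroup_iff').mp hA.1.eigenvectorUnitary.2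
    simpa [Matrix.star_eq_conjTranspose, Matrix.conjTranspose_eq_transpose_of_trivial] using this
  have hspec : A = (hA.1.eigenvectorUnitary : Matrix (Fin n) (Fin n) ℝ)
      * diagonal hA.1.eigenvalues * (hA.1.eigenvectorUnitary : Matrix (Fin n) (Fin n) ℝ)ᵀ := by
    have := hA.1.spectral_theorem
    simpa [Matrix.star_eq_conjTranspose, Matrix.conjTranspose_eq_transpose_of_trivial,
      Function.comp] using this
  have hdef : psdSqrt hA = (hA.1.eigenvectorUnitary : Matrix (Fin n) (Fin n) ℝ)
      * diagonal (fun i => Real.sqrt (hA.1.eigenvalues i))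
      * (hA.1.eigenvectorUnitary : Matrix (Fin n) (Fin n) ℝ)ᵀ := by
    simp [psdSqrt, Matrix.star_eq_conjTranspose, Matrix.conjTranspose_eq_transpose_of_trivial]
  constructor
  · rw [hdef, aux_sandwich_mul hU2]
    conv_rhs => rw [hspec]
    congr 2
    exact diagonal_eq_diagonal_iff.mpr fun i => Real.mul_self_sqrt (hA.eigenvalues_nonneg i)
  · rw [hdef, aux_sandwich_transpose]

end auxiliary

theorem subspace_rayleigh_upper_bound
    {N M : ℕ} (H A : Matrix (Fin N) (Fin N) ℝ)
    (hH : H.PosDef) (hA : A.PosDef) (hHA : (A - H).PosSemidef)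
    (D : Matrix (Fin N) (Fin M) ℝ) (g : Fin N → ℝ) (hg : g ≠ 0)
    (hgD : ∃ u : Fin M → ℝ, g = D.mulVec u)
    (C : Matrix (Fin N) (Fin N) ℝ) (hC : C = D * pinv (Dᵀ * A * D) * Dᵀ)
    (K : Matrix (Fin N) (Fin N) ℝ)
    (hK : K = psdSqrt hA.posSemidef * H⁻¹ * psdSqrt hA.posSemidef)
    (hKherm : K.IsHermitian)
    (κlo : ℝ) (hκlo : κlo = ⨅ i, hKherm.eigenvalues i) :
    1 ≤ κlo ∧
    (g ⬝ᵥ C.mulVec g) / (g ⬝ᵥ H⁻¹.mulVec g) ≤ 1 / κlo ∧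
    (g ⬝ᵥ C.mulVec g) / (g ⬝ᵥ H⁻¹.mulVec g) ≤ 1 := by
  have hNE : Nonempty (Fin N) := by
    rcases isEmpty_or_nonempty (Fin N) with h | h
    · exact absurd (Subsingleton.elim g 0) hg
    · exact h
  -- basic facts about S = sqrt A
  set S : Matrix (Fin N) (Fin N) ℝ := psdSqrt hA.posSemidef with hSdef
  have hS2 : S * S = A := (aux_psdSqrt hA.posSemidef).1
  have hSt : Sᵀ = S := (aux_psdSqrt hA.posSemidef).2
  have hAt : Aᵀ = A := by
    have := hA.1
    rwa [Matrix.IsHermitian, Matrix.conjTranspose_eq_transpose_of_trivial] at this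
  have hHt : Hᵀ = H := by
    have := hH.1
    rwa [Matrix.IsHermitian, Matrix.conjTranspose_eq_transpose_of_trivial] at this
  have hdetA : IsUnit A.det := isUnit_iff_ne_zero.mpr (ne_of_gt hA.det_pos)
  have hdetH : IsUnit H.det := isUnit_iff_ne_zero.mpr (ne_of_gt hH.det_pos)
  have hdetS : IsUnit S.det := by
    have hm : S.det * S.det = A.det := by rw [← Matrix.det_mul, hS2]
    exact isUnit_of_mul_isUnit_left (hm ▸ hdetA)
  have hSS : S * S⁻¹ = 1 := Matrix.mul_nonsing_inv _ hdetS
  have hSS' : S⁻¹ * S = 1 := Matrix.nonsing_inv_mul _ hdetS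
  have hAinv : A⁻¹ = S⁻¹ * S⁻¹ := by rw [← hS2, Matrix.mul_inv_rev]
  have hSinvT : (S⁻¹)ᵀ = S⁻¹ := by rw [Matrix.transpose_nonsing_inv, hSt]
  have hAinvT : (A⁻¹)ᵀ = A⁻¹ := by rw [Matrix.transpose_nonsing_inv, hAt]
  -- step 1 : H⁻¹ - A⁻¹ is PSD
  have key1 : A⁻¹ * (A - H) * (A⁻¹)ᵀ
      + (A⁻¹ * (A - H)) * H⁻¹ * (A⁻¹ * (A - H))ᵀ = H⁻¹ - A⁻¹ := by
    rw [hAinvT, Matrix.transpose_mul, Matrix.transpose_sub, hAt, hHt, hAinvT]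
    simp only [Matrix.mul_sub, Matrix.sub_mul, Matrix.mul_assoc,
      Matrix.mul_nonsing_inv_cancel_left _ _ hdetA, Matrix.nonsing_inv_mul_cancel_left _ _ hdetA,
      Matrix.mul_nonsing_inv_cancel_left _ _ hdetH, Matrix.nonsing_inv_mul_cancel_left _ _ hdetH,
      Matrix.mul_nonsing_inv _ hdetA, Matrix.nonsing_inv_mul _ hdetA,
      Matrix.mul_nonsing_inv _ hdetH, Matrix.nonsing_inv_mul _ hdetH,
      Matrix.mul_one, Matrix.one_mul]
    abel
  have hHAinv : (H⁻¹ - A⁻¹).PosSemidef := by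
    rw [← key1]
    exact (aux_psd_conj hHA A⁻¹).add (aux_psd_conj hH.inv.posSemidef (A⁻¹ * (A - H)))
  -- step 2 : K - 1 is PSD, hence 1 ≤ κlo
  have hid1 : S * A⁻¹ * S = 1 := by
    rw [hAinv]
    calc S * (S⁻¹ * S⁻¹) * S = (S * S⁻¹) * (S⁻¹ * S) := by simp only [Matrix.mul_assoc]
    _ = 1 := by rw [hSS, hSS', Matrix.one_mul]
  have hK1eq : K - (1 : ℝ) • 1 = S * (H⁻¹ - A⁻¹) * Sᵀ := by
    rw [hSt, Matrix.mul_sub, Matrix.sub_mul, hid1, hK, one_smul]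
  have hK1 : (K - (1 : ℝ) • 1).PosSemidef := hK1eq ▸ aux_psd_conj hHAinv S
  have hklo1 : 1 ≤ κlo := by
    rw [hκlo]
    exact le_ciInf (aux_eig_ge_of_psd hKherm 1 hK1)
  -- step 3 : K - κlo • 1 is PSD
  have hKc : (K - κlo • 1).PosSemidef := by
    refine aux_psd_of_eig_ge hKherm κlo (fun i => ?_)
    rw [hκlo]
    exact ciInf_le (Finite.bddBelow_range _) i
  -- step 4 : H⁻¹ - κlo • A⁻¹ is PSD
  have hid2 : S⁻¹ * (S * H⁻¹ * S) * S⁻¹ = H⁻¹ := by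
    calc S⁻¹ * (S * H⁻¹ * S) * S⁻¹ = (S⁻¹ * S) * (H⁻¹ * (S * S⁻¹)) := by simp only [Matrix.mul_assoc]
    _ = H⁻¹ := by rw [hSS, hSS', Matrix.one_mul, Matrix.mul_one]
  have hid3 : S⁻¹ * (κlo • (1 : Matrix (Fin N) (Fin N) ℝ)) * S⁻¹ = κlo • A⁻¹ := by
    rw [Matrix.mul_smul, Matrix.smul_mul, Matrix.mul_one, hAinv]
  have hstep4eq : H⁻¹ - κlo • A⁻¹ = S⁻¹ * (K - κlo • 1) * (S⁻¹)ᵀ := by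
    rw [hSinvT, Matrix.mul_sub, Matrix.sub_mul, hK, hid2, hid3]
  have hstep4 : (H⁻¹ - κlo • A⁻¹).PosSemidef := hstep4eq ▸ aux_psd_conj hKc S⁻¹
  -- step 5 : A⁻¹ - C is PSD
  set S₀ : Matrix (Fin M) (Fin M) ℝ := Dᵀ * A * D with hS₀def
  have hS₀t : S₀ᵀ = S₀ := by
    rw [hS₀def]
    simp only [Matrix.transpose_mul, Matrix.transpose_transpose, hAt, ← Matrix.mul_assoc]
  have hS₀herm : S₀.IsHermitian := by
    rw [Matrix.IsHermitian, Matrix.conjTranspose_eq_transpose_of_trivial]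
    exact hS₀t
  have hex := aux_penrose_exists hS₀herm
  obtain ⟨e1, e2, e3, e4⟩ := aux_pinv_spec hex
  have hBt : (pinv S₀)ᵀ = pinv S₀ := aux_pinv_symm hS₀t hex
  set B : Matrix (Fin M) (Fin M) ℝ := pinv S₀ with hBdef
  set Mm : Matrix (Fin N) (Fin M) ℝ := S * D with hMmdef
  have hMtM : Mmᵀ * Mm = S₀ := by
    rw [hMmdef, Matrix.transpose_mul, hSt, hS₀def]
    calc Dᵀ * S * (S * D) = Dᵀ * (S * S) * D := by simp only [Matrix.mul_assoc]
    _ = Dᵀ * A * D := by rw [hS2]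
  set P : Matrix (Fin N) (Fin N) ℝ := Mm * B * Mmᵀ with hPdef
  have hPt : Pᵀ = P := by
    rw [hPdef]
    simp only [Matrix.transpose_mul, Matrix.transpose_transpose, hBt, ← Matrix.mul_assoc]
  have hPP : P * P = P := by
    rw [hPdef]
    calc (Mm * B * Mmᵀ) * (Mm * B * Mmᵀ) = Mm * (B * (Mmᵀ * Mm) * B) * Mmᵀ := by simp only [Matrix.mul_assoc]
    _ = Mm * B * Mmᵀ := by rw [hMtM, e2]
  have h1P : ((1 : Matrix (Fin N) (Fin N) ℝ) - P).PosSemidef := by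
    have h6 : ((1 : Matrix (Fin N) (Fin N) ℝ) - P)ᵀ * (1 - P) = 1 - P := by
      rw [Matrix.transpose_sub, Matrix.transpose_one, hPt]
      simp only [Matrix.mul_sub, Matrix.sub_mul, Matrix.mul_one, Matrix.one_mul, hPP]
      abel
    rw [← h6]
    have := Matrix.posSemidef_conjTranspose_mul_self ((1 : Matrix (Fin N) (Fin N) ℝ) - P)
    simpa [Matrix.conjTranspose_eq_transpose_of_trivial] using this
  have hid5b : S⁻¹ * P * S⁻¹ = D * B * Dᵀ := by
    rw [hPdef, hMmdef, Matrix.transpose_mul, hSt]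
    calc S⁻¹ * (S * D * B * (Dᵀ * S)) * S⁻¹
        = (S⁻¹ * S) * (D * B * Dᵀ) * (S * S⁻¹) := by simp only [Matrix.mul_assoc]
    _ = D * B * Dᵀ := by rw [hSS, hSS', Matrix.one_mul, Matrix.mul_one]
  have hstep5eq : A⁻¹ - C = S⁻¹ * ((1 : Matrix (Fin N) (Fin N) ℝ) - P) * (S⁻¹)ᵀ := by
    rw [hSinvT, Matrix.mul_sub, Matrix.sub_mul, hid5b, Matrix.mul_one, ← hAinv, hC]
  have hstep5 : (A⁻¹ - C).PosSemidef := hstep5eq ▸ aux_psd_conj h1P S⁻¹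
  -- numeric conclusion
  have hb : 0 < g ⬝ᵥ H⁻¹.mulVec g := by
    have := hH.inv.dotProduct_mulVec_pos hg
    simpa using this
  have hklopos : 0 < κlo := lt_of_lt_of_le one_pos hklo1
  have hac : g ⬝ᵥ C.mulVec g ≤ g ⬝ᵥ A⁻¹.mulVec g := aux_dot_le_of_psd_sub hstep5 g
  have hcb : κlo * (g ⬝ᵥ A⁻¹.mulVec g) ≤ g ⬝ᵥ H⁻¹.mulVec g := by
    have := aux_dot_le_of_psd_sub hstep4 g
    simpa [Matrix.smul_mulVec, dotProduct_smul, smul_eq_mul] using this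
  have hmain : (g ⬝ᵥ C.mulVec g) / (g ⬝ᵥ H⁻¹.mulVec g) ≤ 1 / κlo := by
    rw [div_le_div_iff₀ hb hklopos]
    have h7 : (g ⬝ᵥ C.mulVec g) * κlo ≤ (g ⬝ᵥ A⁻¹.mulVec g) * κlo :=
      mul_le_mul_of_nonneg_right hac hklopos.le
    nlinarith
  refine ⟨hklo1, hmain, le_trans hmain ?_⟩
  rw [div_le_one hklopos]
  exact hklo1
end

section
/- Suppose Assumptions 1 and 2 hold in the batch case, i.e. r_n = r and R_n = R for all n (so F_n = F for all n). Let ε > 0 satisfy εI_N ≺ R, let η̲ > 0 be the smallest eigenvalue of R and η̄ the largest eigenvalue of R + V. Then there exist κ̄_max ∈ [1, ∞) and μ ∈ (0, ∞) such that, setting ϑ = 1 − (1/((1 + ε) κ̄_max)) (1 − ((η̄ − η̲ + 2ε)/(η̄ + η̲))²), one has ϑ ∈ (0, 1) and F(h_n) − inf F ≤ μ ϑⁿ for all n sufficiently large. -/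
open Matrix Filter Topology

section AuxLemmas

open Matrix Filter

variable {N : ℕ}

lemma inner_eq_dot (x y : EuclideanSpace ℝ (Fin N)) : (inner ℝ x y : ℝ) = ofEuc x ⬝ᵥ ofEuc y := by
  simp [PiLp.inner_apply, ofEuc, dotProduct, RCLike.inner_apply, conj_trivial]
  exact Finset.sum_congr rfl (fun _ _ => mul_comm _ _)

lemma dot_self_eq (v : EuclideanSpace ℝ (Fin N)) : ofEuc v ⬝ᵥ ofEuc v = ‖v‖^2 := by
  rw [← inner_eq_dot, real_inner_self_eq_norm_sq]

lemma qf_eq_inner (M : Matrix (Fin N) (Fin N) ℝ) (v : EuclideanSpace ℝ (Fin N)) :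
    qf M v = (inner ℝ v (mulE M v) : ℝ) := (inner_eq_dot v (mulE M v)).symm

lemma qf_spectral (M : Matrix (Fin N) (Fin N) ℝ) (hM : M.IsHermitian) (v : EuclideanSpace ℝ (Fin N)) :
    qf M v = ∑ i, hM.eigenvalues i * (hM.eigenvectorBasis.repr v i)^2 := by
  set b := hM.eigenvectorBasis with hb
  have hsymm := (Matrix.isHermitian_iff_isSymmetric.1 hM)
  have hTv : mulE M v = Matrix.toEuclideanLin M v := rfl
  have h1 : qf M v = (inner ℝ v (Matrix.toEuclideanLin M v) : ℝ) := by
    rw [qf_eq_inner, hTv]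
  have h2 : (inner ℝ v (Matrix.toEuclideanLin M v) : ℝ)
      = inner ℝ (b.repr v) (b.repr (Matrix.toEuclideanLin M v)) := by
    rw [b.repr.inner_map_map]
  rw [h1, h2, PiLp.inner_apply]
  refine Finset.sum_congr rfl (fun i _ => ?_)
  have h3 : b.repr (Matrix.toEuclideanLin M v) i = hM.eigenvalues i * b.repr v i := by
    rw [b.repr_apply_apply, ← hsymm (b i) v, b.repr_apply_apply]
    have h4 : Matrix.toEuclideanLin M (b i) = hM.eigenvalues i • (b i) := by
      have := hM.mulVec_eigenvectorBasis i
      exact congrArg toEuc this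
    rw [h4, real_inner_smul_left]
  rw [h3]; ring_nf; simp [RCLike.inner_apply, conj_trivial]; ring

lemma norm_sq_spectral (M : Matrix (Fin N) (Fin N) ℝ) (hM : M.IsHermitian) (v : EuclideanSpace ℝ (Fin N)) :
    ‖v‖^2 = ∑ i, (hM.eigenvectorBasis.repr v i)^2 := by
  set b := hM.eigenvectorBasis
  have : (inner ℝ v v : ℝ) = inner ℝ (b.repr v) (b.repr v) := (b.repr.inner_map_map v v).symm
  rw [← real_inner_self_eq_norm_sq, this, PiLp.inner_apply]
  refine Finset.sum_congr rfl (fun i _ => ?_)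
  simp [RCLike.inner_apply, conj_trivial]

lemma iInf_le_qf (M : Matrix (Fin N) (Fin N) ℝ) (hM : M.IsHermitian) (v : EuclideanSpace ℝ (Fin N)) :
    (⨅ i, hM.eigenvalues i) * ‖v‖^2 ≤ qf M v := by
  rw [qf_spectral M hM v, norm_sq_spectral M hM v, Finset.mul_sum]
  refine Finset.sum_le_sum (fun i _ => ?_)
  exact mul_le_mul_of_nonneg_right
    (ciInf_le (Set.Finite.bddBelow (Set.finite_range _)) i) (sq_nonneg _)

lemma qf_le_iSup (M : Matrix (Fin N) (Fin N) ℝ) (hM : M.IsHermitian) (v : EuclideanSpace ℝ (Fin N)) :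
    qf M v ≤ (⨆ i, hM.eigenvalues i) * ‖v‖^2 := by
  rw [qf_spectral M hM v, norm_sq_spectral M hM v, Finset.mul_sum]
  refine Finset.sum_le_sum (fun i _ => ?_)
  exact mul_le_mul_of_nonneg_right
    (le_ciSup (Set.Finite.bddAbove (Set.finite_range _)) i) (sq_nonneg _)

lemma exists_min_eigvec (hN : 0 < N) (M : Matrix (Fin N) (Fin N) ℝ) (hM : M.IsHermitian) :
    ∃ v : EuclideanSpace ℝ (Fin N), ‖v‖ = 1 ∧ qf M v = (⨅ i, hM.eigenvalues i) := by
  haveI : Nonempty (Fin N) := ⟨⟨0, hN⟩⟩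
  obtain ⟨i0, hi0⟩ := Finite.exists_min hM.eigenvalues
  have hlo : (⨅ i, hM.eigenvalues i) = hM.eigenvalues i0 :=
    le_antisymm (ciInf_le (Set.Finite.bddBelow (Set.finite_range _)) i0) (le_ciInf hi0)
  refine ⟨hM.eigenvectorBasis i0, hM.eigenvectorBasis.orthonormal.1 i0, ?_⟩
  have h4 : mulE M (hM.eigenvectorBasis i0) = hM.eigenvalues i0 • (hM.eigenvectorBasis i0) :=
    congrArg toEuc (hM.mulVec_eigenvectorBasis i0)
  rw [qf_eq_inner, h4, real_inner_smul_right, real_inner_self_eq_norm_sq,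
    hM.eigenvectorBasis.orthonormal.1 i0, hlo]
  ring

lemma qf_pos_of_pd {M : Matrix (Fin N) (Fin N) ℝ} (hM : M.PosDef)
    {v : EuclideanSpace ℝ (Fin N)} (hv : v ≠ 0) : 0 < qf M v := by
  have := hM.dotProduct_mulVec_pos (x := ofEuc v) (fun h => hv (by ext i; exact congrFun h i))
  simpa [qf, dotProduct, star_trivial] using this

lemma qf_nonneg_of_psd {M : Matrix (Fin N) (Fin N) ℝ} (hM : M.PosSemidef)
    (v : EuclideanSpace ℝ (Fin N)) : 0 ≤ qf M v := by
  have := hM.dotProduct_mulVec_nonneg (ofEuc v)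
  simpa [qf, dotProduct, star_trivial] using this

lemma qf_add (A B : Matrix (Fin N) (Fin N) ℝ) (v : EuclideanSpace ℝ (Fin N)) :
    qf (A + B) v = qf A v + qf B v := by
  simp [qf, Matrix.add_mulVec, dotProduct_add]

lemma qf_sub_smul_one (M : Matrix (Fin N) (Fin N) ℝ) (ε : ℝ) (v : EuclideanSpace ℝ (Fin N)) :
    qf (M - ε • (1 : Matrix (Fin N) (Fin N) ℝ)) v = qf M v - ε * ‖v‖^2 := by
  rw [← dot_self_eq]
  simp [qf, Matrix.sub_mulVec, Matrix.smul_mulVec, Matrix.one_mulVec,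
    dotProduct_sub, dotProduct_smul, smul_eq_mul]

lemma qf_neg_smul (M : Matrix (Fin N) (Fin N) ℝ) (t : ℝ) (v : EuclideanSpace ℝ (Fin N)) :
    qf M (-(t • v)) = t^2 * qf M v := by
  have h1 : ofEuc (-(t • v)) = -(t • ofEuc v) := rfl
  simp only [qf, h1, Matrix.mulVec_neg, Matrix.mulVec_smul, neg_dotProduct,
    dotProduct_neg, smul_dotProduct, dotProduct_smul, smul_eq_mul,
    neg_neg]
  ring

lemma dot_mulVec_symm (M : Matrix (Fin N) (Fin N) ℝ) (hM : M.IsHermitian) (a b : Fin N → ℝ) :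
    a ⬝ᵥ M *ᵥ b = b ⬝ᵥ M *ᵥ a := by
  rw [Matrix.dotProduct_mulVec, ← Matrix.mulVec_transpose, dotProduct_comm]
  congr 1
  rw [show Mᵀ = M from by have := hM.eq; rwa [Matrix.conjTranspose_eq_transpose_of_trivial] at this]

lemma qf_expand (M : Matrix (Fin N) (Fin N) ℝ) (hM : M.IsHermitian) (rr : Fin N → ℝ)
    (x y : EuclideanSpace ℝ (Fin N)) :
    (1/2) * qf M x - rr ⬝ᵥ ofEuc x - ((1/2) * qf M y - rr ⬝ᵥ ofEuc y)
      - (ofEuc (mulE M y - toEuc rr)) ⬝ᵥ (ofEuc (x - y))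
      = (1/2) * qf M (x - y) := by
  have hsub : ofEuc (x - y) = ofEuc x - ofEuc y := rfl
  have hsub2 : ofEuc (mulE M y - toEuc rr) = M *ᵥ ofEuc y - rr := rfl
  set a := ofEuc x; set b := ofEuc y
  simp only [qf, hsub, hsub2, Matrix.mulVec_sub, dotProduct_sub, sub_dotProduct]
  have h1 := dot_mulVec_symm M hM a b
  have h2 : M *ᵥ b ⬝ᵥ a = a ⬝ᵥ M *ᵥ b := dotProduct_comm _ _
  have h3 : M *ᵥ b ⬝ᵥ b = b ⬝ᵥ M *ᵥ b := dotProduct_comm _ _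
  ring_nf
  linarith

lemma abs_qf_le (M : Matrix (Fin N) (Fin N) ℝ) (hM : M.IsHermitian) (v : EuclideanSpace ℝ (Fin N)) :
    |qf M v| ≤ (|⨅ i, hM.eigenvalues i| + |⨆ i, hM.eigenvalues i|) * ‖v‖^2 := by
  have h1 := qf_le_iSup M hM v
  have h2 := iInf_le_qf M hM v
  have h3 : (0:ℝ) ≤ ‖v‖^2 := sq_nonneg _
  rw [abs_le]
  constructor <;> nlinarith [abs_nonneg (⨅ i, hM.eigenvalues i), abs_nonneg (⨆ i, hM.eigenvalues i),
    le_abs_self (⨆ i, hM.eigenvalues i), neg_abs_le (⨅ i, hM.eigenvalues i),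
    le_abs_self (⨅ i, hM.eigenvalues i), neg_abs_le (⨆ i, hM.eigenvalues i)]

lemma hasGradientAt_quad (M : Matrix (Fin N) (Fin N) ℝ) (hM : M.IsHermitian) (rr : Fin N → ℝ)
    (y : EuclideanSpace ℝ (Fin N)) :
    HasGradientAt (fun x => (1/2) * qf M x - rr ⬝ᵥ ofEuc x) (mulE M y - toEuc rr) y := by
  rw [hasGradientAt_iff_isLittleO]
  have key : ∀ x, (1/2) * qf M x - rr ⬝ᵥ ofEuc x - ((1/2) * qf M y - rr ⬝ᵥ ofEuc y)
      - (inner ℝ (mulE M y - toEuc rr) (x - y) : ℝ) = (1/2) * qf M (x - y) := by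
    intro x; rw [inner_eq_dot]; exact qf_expand M hM rr x y
  refine Asymptotics.IsLittleO.congr' ?_ (Filter.Eventually.of_forall (fun x => (key x).symm)) (by rfl)
  rw [Asymptotics.isLittleO_iff]
  intro c hc
  set C := |⨅ i, hM.eigenvalues i| + |⨆ i, hM.eigenvalues i| with hC
  have hC0 : 0 ≤ C := by positivity
  have hball : ∀ᶠ x in nhds y, ‖x - y‖ < 2 * c / (C + 1) := by
    have : Metric.ball y (2 * c / (C + 1)) ∈ nhds y := Metric.ball_mem_nhds y (by positivity)
    filter_upwards [this] with x hx
    rwa [Metric.mem_ball, dist_eq_norm] at hx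
  filter_upwards [hball] with x hx
  have h1 : |qf M (x - y)| ≤ C * ‖x - y‖^2 := abs_qf_le M hM (x - y)
  have h2 : ‖x - y‖ ≥ 0 := norm_nonneg _
  have hnorm : ‖(1:ℝ)/2 * qf M (x - y)‖ = (1/2) * |qf M (x - y)| := by
    rw [Real.norm_eq_abs, abs_mul]; norm_num
  rw [hnorm]
  have hx2 : ‖x - y‖ * (C + 1) < 2 * c := by
    have := (lt_div_iff₀ (show (0:ℝ) < C + 1 by positivity)).1 hx
    linarith
  nlinarith [mul_le_mul_of_nonneg_left (le_of_lt hx2) h2, sq_nonneg (‖x - y‖)]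

lemma HasGradientAt.add' {E : Type*} [NormedAddCommGroup E] [InnerProductSpace ℝ E] [CompleteSpace E]
    {f g : E → ℝ} {a b x : E} (hf : HasGradientAt f a x) (hg : HasGradientAt g b x) :
    HasGradientAt (fun y => f y + g y) (a + b) x := by
  rw [hasGradientAt_iff_hasFDerivAt] at *
  have := hf.add hg
  rw [map_add]; exact this

lemma convex_grad_ineq {E : Type*} [NormedAddCommGroup E] [InnerProductSpace ℝ E] [CompleteSpace E]
    (Ψ : E → ℝ) (hconv : ConvexOn ℝ Set.univ Ψ) (g : E → E)
    (hg : ∀ x, HasGradientAt Ψ (g x) x) (y x : E) :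
    (inner ℝ (g y) (x - y) : ℝ) ≤ Ψ x - Ψ y := by
  set d := x - y with hd
  set φ : ℝ → ℝ := fun t => Ψ (y + t • d) with hφ
  have hL : ∀ t : ℝ, HasDerivAt (fun s : ℝ => y + s • d) d t := by
    intro t
    simpa using ((hasDerivAt_id t).smul_const d).const_add y
  have hder : HasDerivAt φ (inner ℝ (g y) d : ℝ) 0 := by
    have hF := (hasGradientAt_iff_hasFDerivAt.1 (hg (y + (0:ℝ) • d)))
    have := hF.comp_hasDerivAt 0 (hL 0)
    simp only [zero_smul, add_zero, InnerProductSpace.toDual_apply_apply] at this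
    exact this
  have hφconv : ConvexOn ℝ Set.univ φ := by
    have := hconv.comp_affineMap (AffineMap.lineMap y x : ℝ →ᵃ[ℝ] E)
    have heq : φ = Ψ ∘ (AffineMap.lineMap y x : ℝ →ᵃ[ℝ] E) := by
      funext t; simp [hφ, AffineMap.lineMap_apply, hd]
      rw [add_comm]
    rw [heq]
    simpa using this
  have hslope : ∀ t : ℝ, t ∈ Set.Ioc (0:ℝ) 1 → (φ t - φ 0) / t ≤ φ 1 - φ 0 := by
    intro t ht
    have h2 := hφconv.2 (Set.mem_univ (0:ℝ)) (Set.mem_univ (1:ℝ))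
      (show (0:ℝ) ≤ 1 - t by linarith [ht.2]) (le_of_lt ht.1) (by ring)
    simp only [smul_eq_mul, mul_zero, mul_one, zero_add] at h2
    rw [div_le_iff₀ ht.1]
    nlinarith [ht.1]
  have htend : Tendsto (fun t => (φ t - φ 0) / t) (nhdsWithin 0 (Set.Ioi 0)) (nhds (inner ℝ (g y) d : ℝ)) := by
    have h1 := hasDerivAt_iff_tendsto_slope.1 hder
    have h2 : nhdsWithin (0:ℝ) (Set.Ioi 0) ≤ nhdsWithin 0 {(0:ℝ)}ᶜ :=
      nhdsWithin_mono 0 (fun t ht => ne_of_gt ht)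
    refine (h1.mono_left h2).congr' ?_
    filter_upwards [self_mem_nhdsWithin] with t ht
    simp [slope_def_field]
  have hle : (inner ℝ (g y) d : ℝ) ≤ φ 1 - φ 0 := by
    refine le_of_tendsto htend ?_
    filter_upwards [Ioc_mem_nhdsGT_of_mem (Set.mem_Ico.2 ⟨le_refl _, one_pos⟩)] with t ht
    exact hslope t ht
  simpa [hφ, hd] using hle

end AuxLemmas

set_option maxHeartbeats 2000000 in
theorem mm_batch_geometric_decay
    {N : ℕ} (hN : 0 < N)
    (R : Matrix (Fin N) (Fin N) ℝ) (hRpd : R.PosDef)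
    (r : EuclideanSpace ℝ (Fin N))
    (Ψ : EuclideanSpace ℝ (Fin N) → ℝ)
    (hΨbdd : BddBelow (Set.range Ψ))
    (hΨconv : ConvexOn ℝ Set.univ Ψ)
    (hΨC2 : ContDiff ℝ 2 Ψ)
    (gradΨ : EuclideanSpace ℝ (Fin N) → EuclideanSpace ℝ (Fin N))
    (hgradΨ : ∀ x, HasGradientAt Ψ (gradΨ x) x)
    (hessΨ : EuclideanSpace ℝ (Fin N) → Matrix (Fin N) (Fin N) ℝ)
    (hhessΨ : ∀ x, HasFDerivAt gradΨ
      (LinearMap.toContinuousLinearMap (Matrix.toEuclideanLin (hessΨ x))) x)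
    (F : EuclideanSpace ℝ (Fin N) → ℝ)
    (hF : ∀ x, F x = (1/2) * qf R x - ofEuc r ⬝ᵥ ofEuc x + Ψ x)
    (Rn : ℕ → Matrix (Fin N) (Fin N) ℝ) (hRnpsd : ∀ n, (Rn n).PosSemidef)
    (rn : ℕ → EuclideanSpace ℝ (Fin N))
    (Fn : ℕ → EuclideanSpace ℝ (Fin N) → ℝ)
    (hFn : ∀ n x, Fn n x = (1/2) * qf (Rn n) x - ofEuc (rn n) ⬝ᵥ ofEuc x + Ψ x)
    (B : EuclideanSpace ℝ (Fin N) → Matrix (Fin N) (Fin N) ℝ)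
    (hBpsd : ∀ x, (B x).PosSemidef)
    (An : ℕ → EuclideanSpace ℝ (Fin N) → Matrix (Fin N) (Fin N) ℝ)
    (hAn : ∀ n x, An n x = Rn n + B x)
    (gradFn : ℕ → EuclideanSpace ℝ (Fin N) → EuclideanSpace ℝ (Fin N))
    (hgradFn : ∀ n x, HasGradientAt (Fn n) (gradFn n x) x)
    (Θ : ℕ → EuclideanSpace ℝ (Fin N) → EuclideanSpace ℝ (Fin N) → ℝ)
    (hΘ : ∀ n x y, Θ n x y =
      Fn n y + ofEuc (gradFn n y) ⬝ᵥ ofEuc (x - y) + (1/2) * qf (An n y) (x - y))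
    (M : ℕ → ℕ) (D : (n : ℕ) → Matrix (Fin N) (Fin (M n)) ℝ)
    (h : ℕ → EuclideanSpace ℝ (Fin N))
    (halg : ∀ n, h (n+1) ∈ rangeD (D n) ∧
      ∀ y ∈ rangeD (D n), Θ n (h (n+1)) (h n) ≤ Θ n y (h n))
    (hmaj : ∀ n x, Fn n x ≤ Θ n x (h n))
    (ha1r : Summable (fun n => ‖rn n - rn (n+1)‖))
    (ha1R : ∀ i j, Summable (fun n => |Rn n i j - Rn (n+1) i j|))
    (ha1rlim : Tendsto rn atTop (𝓝 r))
    (ha1Rlim : ∀ i j, Tendsto (fun n => Rn n i j) atTop (𝓝 (R i j)))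
    (ha2i : ∀ n, gradFn n (h n) ∈ rangeD (D n) ∧ h n ∈ rangeD (D n))
    (V : Matrix (Fin N) (Fin N) ℝ) (hVpd : V.PosDef)
    (ha2ii : ∀ x, (B x - hessΨ x).PosSemidef ∧ (V - B x).PosSemidef)
    (ha2iii : (∀ n, rn n = r ∧ Rn n = R) ∨
      (∃ c : ℝ, ∀ x, ‖mulE (B x) x - gradΨ x‖ ≤ c))
    (hbatch : ∀ n, rn n = r ∧ Rn n = R)
    (ε : ℝ) (hε : 0 < ε)
    (hεR : (R - ε • (1 : Matrix (Fin N) (Fin N) ℝ)).PosDef)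
    (ηlo ηhi : ℝ) (hηlo : ηlo = ⨅ i, hRpd.1.eigenvalues i) (hηlopos : 0 < ηlo)
    (hRV : (R + V).IsHermitian) (hηhi : ηhi = ⨆ i, hRV.eigenvalues i)
    :
    ∃ κmax : ℝ, 1 ≤ κmax ∧ ∃ μ : ℝ, 0 < μ ∧
      0 < 1 - (1 / ((1 + ε) * κmax)) * (1 - ((ηhi - ηlo + 2 * ε) / (ηhi + ηlo)) ^ 2) ∧
      1 - (1 / ((1 + ε) * κmax)) * (1 - ((ηhi - ηlo + 2 * ε) / (ηhi + ηlo)) ^ 2) < 1 ∧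
      ∃ n₀ : ℕ, ∀ n ≥ n₀,
        F (h n) - (⨅ x, F x) ≤
          μ * (1 - (1 / ((1 + ε) * κmax)) *
              (1 - ((ηhi - ηlo + 2 * ε) / (ηhi + ηlo)) ^ 2)) ^ n := by
  haveI : Nonempty (Fin N) := ⟨⟨0, hN⟩⟩
  have hFnF : ∀ n, Fn n = F := by
    intro n; funext x
    rw [hFn n x, (hbatch n).1, (hbatch n).2, hF]
  set G : EuclideanSpace ℝ (Fin N) → EuclideanSpace ℝ (Fin N) :=
    fun y => mulE R y - r + gradΨ y with hG
  have hgradF : ∀ y, HasGradientAt F (G y) y := by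
    intro y
    have h1 := hasGradientAt_quad R hRpd.1 (ofEuc r) y
    have h2 := HasGradientAt.add' h1 (hgradΨ y)
    have hFeq : F = fun x => ((1/2) * qf R x - ofEuc r ⬝ᵥ ofEuc x) + Ψ x := by
      funext x; rw [hF]
    rw [hFeq]
    exact h2
  have hgEq : ∀ n, gradFn n (h n) = G (h n) := by
    intro n
    have h1 := hgradFn n (h n)
    rw [hFnF n] at h1
    exact h1.unique (hgradF (h n))
  -- eigenvalue bounds
  have hlo_qf : ∀ v, ηlo * ‖v‖^2 ≤ qf R v := by
    intro v; rw [hηlo]; exact iInf_le_qf R hRpd.1 v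
  have hhi_qf : ∀ v, qf (R + V) v ≤ ηhi * ‖v‖^2 := by
    intro v; rw [hηhi]; exact qf_le_iSup (R + V) hRV v
  obtain ⟨v0, hv0n, hv0q⟩ := exists_min_eigvec hN R hRpd.1
  rw [← hηlo] at hv0q
  have hv0ne : v0 ≠ 0 := fun h0 => by simp [h0] at hv0n
  have hεlt : ε < ηlo := by
    have h1 := qf_pos_of_pd hεR hv0ne
    rw [qf_sub_smul_one, hv0n] at h1
    nlinarith [h1, hv0q]
  have hlohi : ηlo ≤ ηhi := by
    have h1 := hhi_qf v0
    rw [qf_add, hv0n] at h1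
    have h2 := qf_nonneg_of_psd hVpd.posSemidef v0
    nlinarith [hv0q]
  have hηhipos : 0 < ηhi := lt_of_lt_of_le hηlopos hlohi
  -- strong convexity inequality
  have key : ∀ y x : EuclideanSpace ℝ (Fin N),
      (inner ℝ (G y) (x - y) : ℝ) + (ηlo/2) * ‖x - y‖^2 ≤ F x - F y := by
    intro y x
    have hquad := qf_expand R hRpd.1 (ofEuc r) x y
    have hrr : toEuc (ofEuc r) = r := rfl
    rw [hrr] at hquad
    have hd1 : (inner ℝ (mulE R y - r) (x - y) : ℝ)
        = (ofEuc (mulE R y - r)) ⬝ᵥ (ofEuc (x - y)) := inner_eq_dot _ _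
    have hΨin := convex_grad_ineq Ψ hΨconv gradΨ hgradΨ y x
    have hq := hlo_qf (x - y)
    have hsplit : (inner ℝ (G y) (x - y) : ℝ)
        = (inner ℝ (mulE R y - r) (x - y) : ℝ) + (inner ℝ (gradΨ y) (x - y) : ℝ) := by
      simp only [hG]
      exact inner_add_left _ _ _
    rw [hF x, hF y, hsplit, hd1]
    linarith [hquad, hΨin, hq]
  -- Polyak-Lojasiewicz type bound
  have PL : ∀ y x : EuclideanSpace ℝ (Fin N), F y - ‖G y‖^2/(2*ηlo) ≤ F x := by
    intro y x
    have hk := key y x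
    have hcs : -(‖G y‖ * ‖x - y‖) ≤ (inner ℝ (G y) (x - y) : ℝ) := by
      have h1 := abs_real_inner_le_norm (G y) (x - y)
      have h2 := neg_abs_le (inner ℝ (G y) (x - y) : ℝ)
      linarith
    have h6 : (F y - F x) * (2*ηlo) ≤ ‖G y‖^2 := by
      nlinarith [sq_nonneg (ηlo * ‖x - y‖ - ‖G y‖), hηlopos, hk, hcs]
    have h7 : F y - F x ≤ ‖G y‖^2 / (2*ηlo) := (le_div_iff₀ (by linarith)).2 h6
    linarith
  have hbdd : BddBelow (Set.range F) := by
    refine ⟨F (h 0) - ‖G (h 0)‖^2/(2*ηlo), ?_⟩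
    rintro _ ⟨x, rfl⟩
    exact PL (h 0) x
  have hinf_le : ∀ x, (⨅ x, F x) ≤ F x := fun x => ciInf_le hbdd x
  have hPLinf : ∀ y, F y - ‖G y‖^2/(2*ηlo) ≤ (⨅ x, F x) := fun y => le_ciInf (fun x => PL y x)
  -- descent step
  have descent : ∀ n, F (h (n+1)) ≤ F (h n) - ‖G (h n)‖^2 / (2*ηhi) := by
    intro n
    obtain ⟨u, hu⟩ := (ha2i n).1
    obtain ⟨w, hw⟩ := (ha2i n).2
    have hgn : gradFn n (h n) = G (h n) := hgEq n
    set t : ℝ := 1/ηhi with ht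
    have hmem : h n - t • (gradFn n (h n)) ∈ rangeD (D n) := by
      refine ⟨w - t • u, ?_⟩
      have hlin : toEuc (D n *ᵥ (w - t • u)) = toEuc (D n *ᵥ w) - t • toEuc (D n *ᵥ u) := by
        rw [Matrix.mulVec_sub, Matrix.mulVec_smul]; rfl
      rw [hlin, ← hw, ← hu]
    have step1 : F (h (n+1)) ≤ Θ n (h n - t • (gradFn n (h n))) (h n) := by
      have h1 := hmaj n (h (n+1))
      rw [hFnF n] at h1
      exact le_trans h1 ((halg n).2 _ hmem)
    have hsub : h n - t • (gradFn n (h n)) - h n = -(t • (gradFn n (h n))) := by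
      abel
    have hθval : Θ n (h n - t • (gradFn n (h n))) (h n)
        = F (h n) - t * ‖G (h n)‖^2 + (1/2) * (t^2 * qf (An n (h n)) (G (h n))) := by
      rw [hΘ, hFnF n, hsub, hgn]
      have hdot : ofEuc (G (h n)) ⬝ᵥ ofEuc (-(t • (G (h n)))) = -(t * ‖G (h n)‖^2) := by
        have h1 : ofEuc (-(t • (G (h n)))) = -(t • ofEuc (G (h n))) := rfl
        rw [h1, dotProduct_neg, dotProduct_smul, smul_eq_mul, dot_self_eq]
      rw [hdot, qf_neg_smul]
      ring
    have hAle : qf (An n (h n)) (G (h n)) ≤ ηhi * ‖G (h n)‖^2 := by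
      have h1 : An n (h n) + (V - B (h n)) = R + V := by
        rw [hAn n (h n), (hbatch n).2]
        abel
      have h2 := qf_add (An n (h n)) (V - B (h n)) (G (h n))
      rw [h1] at h2
      have h3 := qf_nonneg_of_psd (ha2ii (h n)).2 (G (h n))
      have h4 := hhi_qf (G (h n))
      linarith
    have hfinal : F (h n) - t * ‖G (h n)‖^2 + (1/2) * (t^2 * qf (An n (h n)) (G (h n)))
        ≤ F (h n) - ‖G (h n)‖^2 / (2*ηhi) := by
      have h5 : (1/2) * (t^2 * qf (An n (h n)) (G (h n)))
          ≤ (1/2) * (t^2 * (ηhi * ‖G (h n)‖^2)) := by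
        nlinarith [hAle, sq_nonneg t]
      have h6 : F (h n) - t * ‖G (h n)‖^2 + (1/2) * (t^2 * (ηhi * ‖G (h n)‖^2))
          = F (h n) - ‖G (h n)‖^2 / (2*ηhi) := by
        rw [ht]; field_simp; ring
      linarith
    linarith [step1, hθval.le, hfinal]
  -- linear contraction of the objective gap
  have hstep : ∀ n, F (h (n+1)) - (⨅ x, F x) ≤ (1 - ηlo/ηhi) * (F (h n) - (⨅ x, F x)) := by
    intro n
    have h1 := descent n
    have h2 := hPLinf (h n)
    have h2' : F (h n) - (⨅ x, F x) ≤ ‖G (h n)‖^2/(2*ηlo) := by linarith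
    have h2'' : (F (h n) - (⨅ x, F x)) * (2*ηlo) ≤ ‖G (h n)‖^2 := by
      rw [← le_div_iff₀ (by linarith : (0:ℝ) < 2*ηlo)]
      exact h2'
    have h4 : (F (h n) - (⨅ x, F x)) * (2*ηlo) / (2*ηhi) ≤ ‖G (h n)‖^2 / (2*ηhi) := by
      gcongr
    have h5 : (F (h n) - (⨅ x, F x)) * (2*ηlo) / (2*ηhi)
        = ηlo/ηhi * (F (h n) - (⨅ x, F x)) := by
      field_simp
    rw [h5] at h4
    have hexp : (1 - ηlo/ηhi) * (F (h n) - (⨅ x, F x))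
        = (F (h n) - (⨅ x, F x)) - ηlo/ηhi * (F (h n) - (⨅ x, F x)) := by ring
    rw [hexp]
    linarith
  have hq0 : 0 ≤ 1 - ηlo/ηhi := by
    have : ηlo/ηhi ≤ 1 := (div_le_one hηhipos).2 hlohi
    linarith
  have hiter : ∀ n, F (h n) - (⨅ x, F x) ≤ (1 - ηlo/ηhi)^n * (F (h 0) - (⨅ x, F x)) := by
    intro n
    induction n with
    | zero => simp
    | succ k ih =>
      calc F (h (k+1)) - (⨅ x, F x) ≤ (1 - ηlo/ηhi) * (F (h k) - (⨅ x, F x)) := hstep k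
        _ ≤ (1 - ηlo/ηhi) * ((1 - ηlo/ηhi)^k * (F (h 0) - (⨅ x, F x))) :=
            mul_le_mul_of_nonneg_left ih hq0
        _ = (1 - ηlo/ηhi)^(k+1) * (F (h 0) - (⨅ x, F x)) := by ring
  -- constants
  have hden2 : 0 < ηhi + ηlo := by linarith
  have hρpos : 0 < (ηhi - ηlo + 2*ε)/(ηhi + ηlo) := div_pos (by linarith) hden2
  have hρlt : (ηhi - ηlo + 2*ε)/(ηhi + ηlo) < 1 := (div_lt_one hden2).2 (by linarith)
  set ρ : ℝ := (ηhi - ηlo + 2*ε)/(ηhi + ηlo) with hρ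
  have hc0 : 0 < 1 - ρ^2 := by nlinarith
  have hc1 : 1 - ρ^2 < 1 := by nlinarith
  have h1q : 0 < ηlo/ηhi := div_pos hηlopos hηhipos
  have hεpos1 : (0:ℝ) < 1 + ε := by linarith
  refine ⟨max 1 ((1 - ρ^2)/((1+ε)*(ηlo/ηhi))), le_max_left _ _, ?_⟩
  set κ : ℝ := max 1 ((1 - ρ^2)/((1+ε)*(ηlo/ηhi))) with hκ
  have hκ1 : (1:ℝ) ≤ κ := le_max_left _ _
  have hεκ : 0 < (1+ε)*κ := by nlinarith
  have hfrac_pos : 0 < 1/((1+ε)*κ) * (1 - ρ^2) := mul_pos (one_div_pos.2 hεκ) hc0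
  have hθlt1 : 1 - 1/((1+ε)*κ) * (1 - ρ^2) < 1 := by linarith
  have hθpos : 0 < 1 - 1/((1+ε)*κ) * (1 - ρ^2) := by
    have h2 : 1/((1+ε)*κ) ≤ 1 := by
      rw [div_le_one hεκ]; nlinarith
    nlinarith [hc0, hc1, one_div_pos.2 hεκ]
  have hqθ : 1 - ηlo/ηhi ≤ 1 - 1/((1+ε)*κ) * (1 - ρ^2) := by
    have h8 : (1 - ρ^2)/((1+ε)*(ηlo/ηhi)) ≤ κ := le_max_right _ _
    have h9 : 0 < (1+ε)*(ηlo/ηhi) := mul_pos hεpos1 h1q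
    have h10 := (div_le_iff₀ h9).1 h8
    have h11 : 1/((1+ε)*κ) * (1 - ρ^2) ≤ ηlo/ηhi := by
      have heq : 1/((1+ε)*κ) * (1 - ρ^2) = (1 - ρ^2) / ((1+ε)*κ) := by ring
      rw [heq, div_le_iff₀ hεκ]
      nlinarith [h10]
    linarith
  refine ⟨max (F (h 0) - (⨅ x, F x)) 1, lt_of_lt_of_le one_pos (le_max_right _ _),
    hθpos, hθlt1, 0, ?_⟩
  intro n _
  calc F (h n) - (⨅ x, F x) ≤ (1 - ηlo/ηhi)^n * (F (h 0) - (⨅ x, F x)) := hiter n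
    _ ≤ (1 - 1/((1+ε)*κ) * (1 - ρ^2))^n * max (F (h 0) - (⨅ x, F x)) 1 := by
        refine mul_le_mul (pow_le_pow_left₀ hq0 hqθ n) (le_max_left _ _) ?_ ?_
        · have := hinf_le (h 0); linarith
        · exact pow_nonneg (le_of_lt hθpos) n
    _ = max (F (h 0) - (⨅ x, F x)) 1 * (1 - 1/((1+ε)*κ) * (1 - ρ^2))^n := mul_comm _ _
end

section
/- Suppose Assumption 1 and Assumptions 2(i)–(ii) hold, and assume additionally that the map h ↦ B(h)h − ∇Ψ(h) is bounded on ℝ^N (Assumption 2(iii)(b)) and that 0 belongs to the range of D_n for every n. Then the sequence of MM subspace iterates (h_n)_{n≥1} is bounded: there exist ζ > 0 and n₀ ≥ 1 such that ‖h_{n+1}‖ ≤ ζ for every n ≥ n₀. -/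
open Matrix Filter Topology

lemma ofEuc_sub {N : ℕ} (x y : EuclideanSpace ℝ (Fin N)) : ofEuc (x - y) = ofEuc x - ofEuc y := rfl
lemma ofEuc_zero {N : ℕ} : ofEuc (0 : EuclideanSpace ℝ (Fin N)) = 0 := rfl
lemma ofEuc_smul {N : ℕ} (c : ℝ) (x : EuclideanSpace ℝ (Fin N)) : ofEuc (c • x) = c • ofEuc x := rfl
lemma ofEuc_ne_zero {N : ℕ} {x : EuclideanSpace ℝ (Fin N)} (hx : x ≠ 0) : ofEuc x ≠ 0 := fun h0 => hx (PiLp.ext fun i => congrFun h0 i)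

lemma entry_le_norm {N : ℕ} (x : EuclideanSpace ℝ (Fin N)) (i : Fin N) : |ofEuc x i| ≤ ‖x‖ := by
  have := EuclideanSpace.norm_eq x
  rw [this]
  have h1 : |ofEuc x i| = Real.sqrt (‖x i‖^2) := by
    rw [Real.sqrt_sq_eq_abs, abs_norm, Real.norm_eq_abs]; rfl
  rw [h1]
  apply Real.sqrt_le_sqrt
  exact Finset.single_le_sum (f := fun j => ‖x j‖^2) (fun j _ => sq_nonneg _) (Finset.mem_univ i)

lemma qf_sub {N : ℕ} (A B : Matrix (Fin N) (Fin N) ℝ) (x : EuclideanSpace ℝ (Fin N)) :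
    qf (A - B) x = qf A x - qf B x := by
  simp [qf, Matrix.sub_mulVec, dotProduct_sub]

lemma qf_abs_le {N : ℕ} (M : Matrix (Fin N) (Fin N) ℝ) (x : EuclideanSpace ℝ (Fin N)) :
    |qf M x| ≤ (∑ i, ∑ j, |M i j|) * (‖x‖ * ‖x‖) := by
  have hx : ∀ i, |ofEuc x i| ≤ ‖x‖ := entry_le_norm x
  have h0 : (0:ℝ) ≤ ‖x‖ := norm_nonneg x
  calc |qf M x| = |∑ i, ofEuc x i * ∑ j, M i j * ofEuc x j| := by
        simp [qf, dotProduct, Matrix.mulVec, dotProduct]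
    _ ≤ ∑ i, |ofEuc x i * ∑ j, M i j * ofEuc x j| := Finset.abs_sum_le_sum_abs _ _
    _ ≤ ∑ i, ∑ j, |M i j| * (‖x‖ * ‖x‖) := by
        apply Finset.sum_le_sum
        intro i _
        rw [abs_mul]
        calc |ofEuc x i| * |∑ j, M i j * ofEuc x j| ≤ ‖x‖ * ∑ j, |M i j| * ‖x‖ := by
              apply mul_le_mul (hx i) ?_ (abs_nonneg _) h0
              refine le_trans (Finset.abs_sum_le_sum_abs _ _) (Finset.sum_le_sum fun j _ => ?_)
              rw [abs_mul]
              exact mul_le_mul_of_nonneg_left (hx j) (abs_nonneg _)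
          _ = ∑ j, |M i j| * (‖x‖ * ‖x‖) := by
              rw [Finset.mul_sum]; exact Finset.sum_congr rfl fun j _ => by ring
    _ = (∑ i, ∑ j, |M i j|) * (‖x‖ * ‖x‖) := by rw [Finset.sum_mul]; congr 1; ext i; rw [Finset.sum_mul]

lemma dot_abs_le {N : ℕ} (v x : EuclideanSpace ℝ (Fin N)) :
    |ofEuc v ⬝ᵥ ofEuc x| ≤ (N:ℝ) * (‖v‖ * ‖x‖) := by
  calc |∑ i, ofEuc v i * ofEuc x i| ≤ ∑ i, |ofEuc v i * ofEuc x i| := Finset.abs_sum_le_sum_abs _ _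
    _ ≤ ∑ _i : Fin N, ‖v‖ * ‖x‖ := Finset.sum_le_sum fun i _ => by
        rw [abs_mul]
        exact mul_le_mul (entry_le_norm v i) (entry_le_norm x i) (abs_nonneg _) (norm_nonneg _)
    _ = (N:ℝ) * (‖v‖ * ‖x‖) := by simp [Finset.sum_const, Finset.card_univ]

lemma qf_smul {N : ℕ} (M : Matrix (Fin N) (Fin N) ℝ) (c : ℝ) (x : EuclideanSpace ℝ (Fin N)) :
    qf M (c • x) = c^2 * qf M x := by
  simp [qf, ofEuc_smul, Matrix.mulVec_smul, dotProduct_smul, smul_dotProduct, smul_eq_mul]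
  ring

lemma qf_continuous {N : ℕ} (M : Matrix (Fin N) (Fin N) ℝ) :
    Continuous fun x : EuclideanSpace ℝ (Fin N) => qf M x := by
  have h : Continuous fun x : EuclideanSpace ℝ (Fin N) => ofEuc x := PiLp.continuous_ofLp (p := 2) (β := fun _ : Fin N => ℝ)
  have he : ∀ i, Continuous fun x : EuclideanSpace ℝ (Fin N) => ofEuc x i :=
    fun i => (continuous_apply i).comp h
  simp only [qf, dotProduct, Matrix.mulVec]
  exact continuous_finset_sum _ fun i _ => (he i).mul
    (continuous_finset_sum _ fun j _ => continuous_const.mul (he j))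

lemma qf_lower {N : ℕ} (hN : 0 < N) (R : Matrix (Fin N) (Fin N) ℝ) (hRpd : R.PosDef) :
    ∃ lam : ℝ, 0 < lam ∧ ∀ x : EuclideanSpace ℝ (Fin N), lam * ‖x‖^2 ≤ qf R x := by
  haveI : Nonempty (Fin N) := ⟨⟨0, hN⟩⟩
  have hsp : (Metric.sphere (0 : EuclideanSpace ℝ (Fin N)) 1).Nonempty := by
    apply NormedSpace.sphere_nonempty.2; norm_num
  obtain ⟨z, hz, hmin⟩ := (isCompact_sphere (0 : EuclideanSpace ℝ (Fin N)) 1).exists_isMinOn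
    hsp (qf_continuous R).continuousOn
  have hznorm : ‖z‖ = 1 := by simpa using hz
  have hzne : z ≠ 0 := by intro hc; rw [hc] at hznorm; simp at hznorm
  refine ⟨qf R z, hRpd.dotProduct_mulVec_pos (ofEuc_ne_zero hzne), fun x => ?_⟩
  rcases eq_or_ne x 0 with rfl | hx
  · simp [qf, ofEuc_zero]
  · have hxn : 0 < ‖x‖ := norm_pos_iff.2 hx
    have hu : (‖x‖⁻¹ • x) ∈ Metric.sphere (0 : EuclideanSpace ℝ (Fin N)) 1 := by
      simp [norm_smul, abs_of_pos (inv_pos.2 hxn), inv_mul_cancel₀ (ne_of_gt hxn)]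
    have : qf R z ≤ qf R (‖x‖⁻¹ • x) := hmin hu
    have hq : qf R (‖x‖⁻¹ • x) = (‖x‖⁻¹)^2 * qf R x := qf_smul R _ x
    rw [hq] at this
    have h2 : qf R z * ‖x‖^2 ≤ (‖x‖⁻¹)^2 * qf R x * ‖x‖^2 :=
      mul_le_mul_of_nonneg_right this (sq_nonneg _)
    calc qf R z * ‖x‖^2 ≤ (‖x‖⁻¹)^2 * qf R x * ‖x‖^2 := h2
      _ = qf R x := by field_simp

set_option maxHeartbeats 1000000 in
theorem mm_iterates_bounded
    {N : ℕ} (hN : 0 < N)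
    (R : Matrix (Fin N) (Fin N) ℝ) (hRpd : R.PosDef)
    (r : EuclideanSpace ℝ (Fin N))
    (Ψ : EuclideanSpace ℝ (Fin N) → ℝ)
    (hΨbdd : BddBelow (Set.range Ψ))
    (hΨconv : ConvexOn ℝ Set.univ Ψ)
    (hΨC2 : ContDiff ℝ 2 Ψ)
    (gradΨ : EuclideanSpace ℝ (Fin N) → EuclideanSpace ℝ (Fin N))
    (hgradΨ : ∀ x, HasGradientAt Ψ (gradΨ x) x)
    (hessΨ : EuclideanSpace ℝ (Fin N) → Matrix (Fin N) (Fin N) ℝ)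
    (hhessΨ : ∀ x, HasFDerivAt gradΨ
      (LinearMap.toContinuousLinearMap (Matrix.toEuclideanLin (hessΨ x))) x)
    (F : EuclideanSpace ℝ (Fin N) → ℝ)
    (hF : ∀ x, F x = (1/2) * qf R x - ofEuc r ⬝ᵥ ofEuc x + Ψ x)
    (Rn : ℕ → Matrix (Fin N) (Fin N) ℝ) (hRnpsd : ∀ n, (Rn n).PosSemidef)
    (rn : ℕ → EuclideanSpace ℝ (Fin N))
    (Fn : ℕ → EuclideanSpace ℝ (Fin N) → ℝ)
    (hFn : ∀ n x, Fn n x = (1/2) * qf (Rn n) x - ofEuc (rn n) ⬝ᵥ ofEuc x + Ψ x)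
    (B : EuclideanSpace ℝ (Fin N) → Matrix (Fin N) (Fin N) ℝ)
    (hBpsd : ∀ x, (B x).PosSemidef)
    (An : ℕ → EuclideanSpace ℝ (Fin N) → Matrix (Fin N) (Fin N) ℝ)
    (hAn : ∀ n x, An n x = Rn n + B x)
    (gradFn : ℕ → EuclideanSpace ℝ (Fin N) → EuclideanSpace ℝ (Fin N))
    (hgradFn : ∀ n x, HasGradientAt (Fn n) (gradFn n x) x)
    (Θ : ℕ → EuclideanSpace ℝ (Fin N) → EuclideanSpace ℝ (Fin N) → ℝ)
    (hΘ : ∀ n x y, Θ n x y =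
      Fn n y + ofEuc (gradFn n y) ⬝ᵥ ofEuc (x - y) + (1/2) * qf (An n y) (x - y))
    (M : ℕ → ℕ) (D : (n : ℕ) → Matrix (Fin N) (Fin (M n)) ℝ)
    (h : ℕ → EuclideanSpace ℝ (Fin N))
    (halg : ∀ n, h (n+1) ∈ rangeD (D n) ∧
      ∀ y ∈ rangeD (D n), Θ n (h (n+1)) (h n) ≤ Θ n y (h n))
    (hmaj : ∀ n x, Fn n x ≤ Θ n x (h n))
    (ha1r : Summable (fun n => ‖rn n - rn (n+1)‖))
    (ha1R : ∀ i j, Summable (fun n => |Rn n i j - Rn (n+1) i j|))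
    (ha1rlim : Tendsto rn atTop (𝓝 r))
    (ha1Rlim : ∀ i j, Tendsto (fun n => Rn n i j) atTop (𝓝 (R i j)))
    (ha2i : ∀ n, gradFn n (h n) ∈ rangeD (D n) ∧ h n ∈ rangeD (D n))
    (V : Matrix (Fin N) (Fin N) ℝ) (hVpd : V.PosDef)
    (ha2ii : ∀ x, (B x - hessΨ x).PosSemidef ∧ (V - B x).PosSemidef)
    (ha2iiib : ∃ c : ℝ, ∀ x, ‖mulE (B x) x - gradΨ x‖ ≤ c)
    (hzero : ∀ n, (0 : EuclideanSpace ℝ (Fin N)) ∈ rangeD (D n))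
    :
    ∃ ζ : ℝ, 0 < ζ ∧ ∃ n₀ : ℕ, 1 ≤ n₀ ∧ ∀ n ≥ n₀, ‖h (n+1)‖ ≤ ζ := by
  classical
  -- lower bound for Ψ
  obtain ⟨m, hm⟩ := hΨbdd
  have hmΨ : ∀ x, m ≤ Ψ x := fun x => hm ⟨x, rfl⟩
  -- coercivity constant for R
  obtain ⟨lam, hlam, hlamle⟩ := qf_lower hN R hRpd
  -- descent property
  have hΘself : ∀ n, Θ n (h n) (h n) = Fn n (h n) := by
    intro n
    rw [hΘ n (h n) (h n)]
    simp [qf, sub_self, ofEuc_zero]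
  have hdesc : ∀ n, Fn n (h (n+1)) ≤ Fn n (h n) := fun n =>
    (hmaj n _).trans (((halg n).2 (h n) (ha2i n).2).trans_eq (hΘself n))
  -- summable perturbation
  obtain ⟨S, hSdef⟩ : ∃ S : ℕ → ℝ, ∀ n, S n = ∑ i, ∑ j, |Rn n i j - Rn (n+1) i j| :=
    ⟨_, fun _ => rfl⟩
  obtain ⟨ρ, hρdef⟩ : ∃ ρ : ℕ → ℝ, ∀ n, ρ n = ‖rn n - rn (n+1)‖ := ⟨_, fun _ => rfl⟩
  have hSnn : ∀ n, 0 ≤ S n := fun n => by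
    rw [hSdef]
    exact Finset.sum_nonneg fun i _ => Finset.sum_nonneg fun j _ => abs_nonneg _
  have hρnn : ∀ n, 0 ≤ ρ n := fun n => by rw [hρdef]; exact norm_nonneg _
  have hSsum : Summable S := by
    have : S = fun n => ∑ i, ∑ j, |Rn n i j - Rn (n+1) i j| := funext hSdef
    rw [this]
    exact summable_sum fun i _ => summable_sum fun j _ => ha1R i j
  have hρsum : Summable ρ := by
    have : ρ = fun n => ‖rn n - rn (n+1)‖ := funext hρdef
    rw [this]; exact ha1r
  obtain ⟨ε, hεdef⟩ : ∃ ε : ℕ → ℝ, ∀ n, ε n = S n / 2 + (N:ℝ) * ρ n := ⟨_, fun _ => rfl⟩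
  have hεnn : ∀ n, 0 ≤ ε n := fun n => by
    rw [hεdef]
    have h1 := hSnn n; have h2 := hρnn n
    positivity
  have hεsum : Summable ε := by
    have : ε = fun n => S n / 2 + (N:ℝ) * ρ n := funext hεdef
    rw [this]
    exact (hSsum.div_const 2).add (hρsum.mul_left _)
  obtain ⟨T, hTdef⟩ : ∃ T : ℝ, T = ∑' n, ε n := ⟨_, rfl⟩
  have hpartial : ∀ s : Finset ℕ, ∑ k ∈ s, ε k ≤ T := fun s => by
    rw [hTdef]
    exact hεsum.sum_le_tsum s (fun k _ => hεnn k)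
  -- perturbation bound
  have hpert : ∀ n x, Fn (n+1) x ≤ Fn n x + ε n * (2 * ‖x‖^2 + 1) := by
    intro n x
    have key : Fn (n+1) x - Fn n x
        = (1/2) * qf (Rn (n+1) - Rn n) x - ofEuc (rn (n+1) - rn n) ⬝ᵥ ofEuc x := by
      rw [hFn, hFn, qf_sub, ofEuc_sub, sub_dotProduct]; ring
    have hq : |qf (Rn (n+1) - Rn n) x| ≤ S n * (‖x‖ * ‖x‖) := by
      have h0 := qf_abs_le (Rn (n+1) - Rn n) x
      have hsum : (∑ i, ∑ j, |(Rn (n+1) - Rn n) i j|) = S n := by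
        rw [hSdef]
        refine Finset.sum_congr rfl fun i _ => Finset.sum_congr rfl fun j _ => ?_
        simp [Matrix.sub_apply, abs_sub_comm]
      rwa [hsum] at h0
    have hd : |ofEuc (rn (n+1) - rn n) ⬝ᵥ ofEuc x| ≤ (N:ℝ) * (ρ n * ‖x‖) := by
      have h0 := dot_abs_le (rn (n+1) - rn n) x
      rw [norm_sub_rev, ← hρdef] at h0
      exact h0
    have h1 : qf (Rn (n+1) - Rn n) x ≤ S n * (‖x‖ * ‖x‖) := (abs_le.mp hq).2
    have h2 : -((N:ℝ) * (ρ n * ‖x‖)) ≤ ofEuc (rn (n+1) - rn n) ⬝ᵥ ofEuc x := (abs_le.mp hd).1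
    have ht : ‖x‖ ≤ ‖x‖^2 + 1 := by nlinarith [sq_nonneg (‖x‖ - 1)]
    have hρn := hρnn n
    have hNnn : (0:ℝ) ≤ (N:ℝ) := Nat.cast_nonneg _
    have hxnn : (0:ℝ) ≤ ‖x‖ := norm_nonneg _
    have hSx := hSnn n
    have htt : ‖x‖ * ‖x‖ = ‖x‖^2 := (sq ‖x‖).symm
    have p1 : 0 ≤ S n * ‖x‖^2 := mul_nonneg hSx (sq_nonneg _)
    have p2 : 0 ≤ (N:ℝ) * ρ n * ‖x‖^2 := mul_nonneg (mul_nonneg hNnn hρn) (sq_nonneg _)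
    have e2 : (N:ℝ) * (ρ n * ‖x‖) ≤ (N:ℝ) * ρ n * (‖x‖^2+1) := by
      have h9 := mul_le_mul_of_nonneg_left ht (mul_nonneg hNnn hρn)
      calc (N:ℝ) * (ρ n * ‖x‖) = (N:ℝ) * ρ n * ‖x‖ := by ring
        _ ≤ (N:ℝ) * ρ n * (‖x‖^2+1) := h9
    have expand : ε n * (2*‖x‖^2+1)
        = S n * ‖x‖^2 + S n/2 + ((N:ℝ) * ρ n * (‖x‖^2+1) + (N:ℝ) * ρ n * ‖x‖^2) := by
      rw [hεdef]; ring
    rw [htt] at h1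
    rw [show Fn n x + ε n * (2 * ‖x‖^2 + 1)
      = Fn n x + (S n * ‖x‖^2 + S n/2 + ((N:ℝ) * ρ n * (‖x‖^2+1) + (N:ℝ) * ρ n * ‖x‖^2))
      from by rw [expand]]
    linarith
  -- eventual coercivity of Fn
  obtain ⟨G, hGdef⟩ : ∃ G : ℕ → ℝ, ∀ n, G n = ∑ i, ∑ j, |Rn n i j - R i j| := ⟨_, fun _ => rfl⟩
  have hGlim : Tendsto G atTop (𝓝 0) := by
    have hfun : G = fun n => ∑ i, ∑ j, |Rn n i j - R i j| := funext hGdef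
    rw [hfun]
    have h0 : Tendsto (fun n => ∑ i, ∑ j, |Rn n i j - R i j|) atTop
        (𝓝 (∑ i : Fin N, ∑ j : Fin N, (0:ℝ))) := by
      refine tendsto_finset_sum _ fun i _ => tendsto_finset_sum _ fun j _ => ?_
      have h1 : Tendsto (fun n => Rn n i j - R i j) atTop (𝓝 0) := by
        simpa using (ha1Rlim i j).sub (tendsto_const_nhds (x := R i j))
      simpa using h1.abs
    simpa using h0
  have hrlim : Tendsto (fun n => ‖rn n - r‖) atTop (𝓝 0) :=
    tendsto_iff_norm_sub_tendsto_zero.mp ha1rlim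
  have hev : ∀ᶠ n in atTop, G n ≤ lam / 2 ∧ ‖rn n - r‖ ≤ 1 := by
    have h1 : ∀ᶠ n in atTop, G n < lam / 2 :=
      hGlim.eventually (eventually_lt_nhds (by positivity))
    have h2 : ∀ᶠ n in atTop, ‖rn n - r‖ < 1 :=
      hrlim.eventually (eventually_lt_nhds one_pos)
    filter_upwards [h1, h2] with n hn1 hn2
    exact ⟨le_of_lt hn1, le_of_lt hn2⟩
  obtain ⟨n₁, hn₁⟩ := eventually_atTop.mp hev
  obtain ⟨a, hadef⟩ : ∃ a : ℝ, a = lam / 4 := ⟨_, rfl⟩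
  have ha : 0 < a := by rw [hadef]; positivity
  obtain ⟨b, hbdef⟩ : ∃ b : ℝ, b = (N:ℝ) * (‖r‖ + 1) := ⟨_, rfl⟩
  have hb : 0 ≤ b := by rw [hbdef]; positivity
  have hcoerc : ∀ n ≥ n₁, ∀ x : EuclideanSpace ℝ (Fin N), a * ‖x‖^2 - b * ‖x‖ + m ≤ Fn n x := by
    intro n hn x
    obtain ⟨hG2, hr2⟩ := hn₁ n hn
    rw [hFn]
    have hqR : lam * ‖x‖^2 ≤ qf R x := hlamle x
    have hsplit : qf (Rn n) x = qf R x + qf (Rn n - R) x := by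
      rw [qf_sub]; ring
    have habs : |qf (Rn n - R) x| ≤ G n * (‖x‖ * ‖x‖) := by
      have h0 := qf_abs_le (Rn n - R) x
      have hsum : (∑ i, ∑ j, |(Rn n - R) i j|) = G n := by
        rw [hGdef]
        exact Finset.sum_congr rfl fun i _ => Finset.sum_congr rfl fun j _ => by
          simp [Matrix.sub_apply]
      rwa [hsum] at h0
    have hGnn : 0 ≤ G n := by
      rw [hGdef]
      exact Finset.sum_nonneg fun i _ => Finset.sum_nonneg fun j _ => abs_nonneg _
    have h1 : -(G n * (‖x‖ * ‖x‖)) ≤ qf (Rn n - R) x := (abs_le.mp habs).1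
    have hdot : ofEuc (rn n) ⬝ᵥ ofEuc x ≤ (N:ℝ) * (‖rn n‖ * ‖x‖) :=
      (abs_le.mp (dot_abs_le (rn n) x)).2
    have hrn : ‖rn n‖ ≤ ‖r‖ + 1 := by
      calc ‖rn n‖ = ‖rn n - r + r‖ := by rw [sub_add_cancel]
        _ ≤ ‖rn n - r‖ + ‖r‖ := norm_add_le _ _
        _ ≤ ‖r‖ + 1 := by linarith
    have hxnn : (0:ℝ) ≤ ‖x‖ := norm_nonneg _
    have hΨx := hmΨ x
    have hdot2 : ofEuc (rn n) ⬝ᵥ ofEuc x ≤ b * ‖x‖ := by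
      refine hdot.trans ?_
      rw [hbdef]
      have h5 : ‖rn n‖ * ‖x‖ ≤ (‖r‖ + 1) * ‖x‖ := mul_le_mul_of_nonneg_right hrn hxnn
      nlinarith [Nat.cast_nonneg (α := ℝ) N]
    have hGx : G n * (‖x‖ * ‖x‖) ≤ (lam/2) * (‖x‖ * ‖x‖) :=
      mul_le_mul_of_nonneg_right hG2 (by positivity)
    have htt : ‖x‖ * ‖x‖ = ‖x‖^2 := (sq ‖x‖).symm
    rw [htt] at h1 hGx
    rw [hadef]
    linarith
  obtain ⟨m₁, hm₁def⟩ : ∃ m₁ : ℝ, m₁ = m - b^2 / (2*a) := ⟨_, rfl⟩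
  have hcoerc2 : ∀ n ≥ n₁, ∀ x : EuclideanSpace ℝ (Fin N), (a/2) * ‖x‖^2 + m₁ ≤ Fn n x := by
    intro n hn x
    have h1 := hcoerc n hn x
    have hxnn : (0:ℝ) ≤ ‖x‖ := norm_nonneg _
    have key : (a/2) * ‖x‖^2 + m₁ ≤ a * ‖x‖^2 - b * ‖x‖ + m := by
      rw [hm₁def]
      have hq2 : b^2 / (2*a) * (2*a) = b^2 := div_mul_cancel₀ _ (by positivity)
      nlinarith [sq_nonneg (a * ‖x‖ - b), mul_pos ha ha]
    linarith
  -- the Lyapunov sequence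
  obtain ⟨u, hudef⟩ : ∃ u : ℕ → ℝ, ∀ n, u n = Fn n (h n) := ⟨_, fun _ => rfl⟩
  obtain ⟨v, hvdef⟩ : ∃ v : ℕ → ℝ, ∀ n, v n = u n - m₁ := ⟨_, fun _ => rfl⟩
  obtain ⟨w, hwdef⟩ : ∃ w : ℕ → ℝ, ∀ n, w n = v n + 1 := ⟨_, fun _ => rfl⟩
  have hvnn : ∀ n ≥ n₁, 0 ≤ v n := by
    intro n hn
    have h1 : (a/2) * ‖h n‖^2 + m₁ ≤ u n := by rw [hudef]; exact hcoerc2 n hn (h n)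
    have h2 : 0 ≤ (a/2) * ‖h n‖^2 := by positivity
    rw [hvdef]
    linarith
  have hwnn : ∀ n ≥ n₁, 1 ≤ w n := fun n hn => by
    have := hvnn n hn; rw [hwdef]; linarith
  obtain ⟨c, hcdef⟩ : ∃ c : ℝ, c = 2/a := ⟨_, rfl⟩
  have hc : 0 < c := by rw [hcdef]; positivity
  have hsq : ∀ n ≥ n₁, ‖h (n+1)‖^2 ≤ c * v n := by
    intro n hn
    have h1 : (a/2) * ‖h (n+1)‖^2 + m₁ ≤ Fn n (h (n+1)) := hcoerc2 n hn (h (n+1))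
    have h2 : Fn n (h (n+1)) ≤ u n := by rw [hudef]; exact hdesc n
    have h3 : (a/2) * ‖h (n+1)‖^2 ≤ v n := by rw [hvdef]; linarith
    have h4 := mul_le_mul_of_nonneg_left h3 hc.le
    calc ‖h (n+1)‖^2 = c * ((a/2) * ‖h (n+1)‖^2) := by rw [hcdef]; field_simp
      _ ≤ c * v n := h4
  obtain ⟨K, hKdef⟩ : ∃ K : ℝ, K = 2*c + 1 := ⟨_, rfl⟩
  have hK : 0 < K := by rw [hKdef]; linarith
  have hrec : ∀ n ≥ n₁, w (n+1) ≤ w n * Real.exp (K * ε n) := by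
    intro n hn
    have h1 : u (n+1) ≤ Fn n (h (n+1)) + ε n * (2 * ‖h (n+1)‖^2 + 1) := by
      rw [hudef]; exact hpert n (h (n+1))
    have h2 : Fn n (h (n+1)) ≤ u n := by rw [hudef]; exact hdesc n
    have h3 : ‖h (n+1)‖^2 ≤ c * v n := hsq n hn
    have h4 : 0 ≤ ε n := hεnn n
    have h5 : 0 ≤ v n := hvnn n hn
    have step1 : w (n+1) ≤ w n * (1 + K * ε n) := by
      have hεv : ε n * (2 * ‖h (n+1)‖^2 + 1) ≤ ε n * (2 * (c * v n) + 1) := by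
        apply mul_le_mul_of_nonneg_left _ h4
        linarith
      have hKexp : ε n * (2 * (c * v n) + 1) ≤ K * ε n * (v n + 1) := by
        rw [hKdef]
        have e1 : 0 ≤ ε n * v n := mul_nonneg h4 h5
        have e2 : 0 ≤ c * ε n := mul_nonneg hc.le h4
        nlinarith [e1, e2]
      have hw1eq : w (n+1) = u (n+1) - m₁ + 1 := by rw [hwdef, hvdef]
      have hvn : v n = u n - m₁ := hvdef n
      have expand2 : w n * (1 + K * ε n) = (v n + 1) + K * ε n * (v n + 1) := by
        rw [hwdef]; ring
      linarith
    have hwn0 : 0 ≤ w n := by linarith [hwnn n hn]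
    calc w (n+1) ≤ w n * (1 + K * ε n) := step1
      _ ≤ w n * Real.exp (K * ε n) := by
          apply mul_le_mul_of_nonneg_left _ hwn0
          have := Real.add_one_le_exp (K * ε n)
          linarith
  -- Gronwall
  have hbound : ∀ n ≥ n₁, w n ≤ w n₁ * Real.exp (K * T) := by
    have hstep : ∀ n, n₁ ≤ n → w n ≤ w n₁ * Real.exp (K * ∑ k ∈ Finset.Ico n₁ n, ε k) := by
      intro n hn
      induction n, hn using Nat.le_induction with
      | base => simp
      | succ n hn ih =>
        calc w (n+1) ≤ w n * Real.exp (K * ε n) := hrec n hn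
          _ ≤ (w n₁ * Real.exp (K * ∑ k ∈ Finset.Ico n₁ n, ε k)) * Real.exp (K * ε n) := by
              apply mul_le_mul_of_nonneg_right ih (Real.exp_nonneg _)
          _ = w n₁ * Real.exp (K * ∑ k ∈ Finset.Ico n₁ (n+1), ε k) := by
              rw [Finset.sum_Ico_succ_top hn, mul_add, Real.exp_add, mul_assoc]
    intro n hn
    refine (hstep n hn).trans ?_
    have hw1 : 0 ≤ w n₁ := by linarith [hwnn n₁ le_rfl]
    apply mul_le_mul_of_nonneg_left _ hw1
    apply Real.exp_le_exp.2
    exact mul_le_mul_of_nonneg_left (hpartial _) (le_of_lt hK)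
  obtain ⟨W, hWdef⟩ : ∃ W : ℝ, W = w n₁ * Real.exp (K * T) := ⟨_, rfl⟩
  have hW1 : 0 ≤ W := by
    rw [hWdef]
    have := hwnn n₁ le_rfl
    positivity
  refine ⟨Real.sqrt (c * W) + 1, by positivity, max n₁ 1, le_max_right _ _, ?_⟩
  intro n hn
  have hn1 : n₁ ≤ n := le_trans (le_max_left _ _) hn
  have h1 : ‖h (n+1)‖^2 ≤ c * v n := hsq n hn1
  have h2 : v n ≤ W := by
    have h3 := hbound n hn1
    rw [← hWdef] at h3
    have h4 : w n = v n + 1 := hwdef n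
    linarith
  have h3 : ‖h (n+1)‖^2 ≤ c * W := by
    refine h1.trans ?_
    exact mul_le_mul_of_nonneg_left h2 hc.le
  have h4 : ‖h (n+1)‖ = Real.sqrt (‖h (n+1)‖^2) := (Real.sqrt_sq (norm_nonneg _)).symm
  rw [h4]
  have h5 := Real.sqrt_le_sqrt h3
  linarith
end
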